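/- arXiv:1503.05310 — 6 statements merged into one kernel-verified Lean document; each statement's English description precedes it below -/
import Mathlib

section
/- Suppose h(t,s) ≥ 0 for all t in [σ,τ] and s ≥ 0, and let u be a nonnegative C^2 solution of u'' + c u' + h(t,u) = 0 on [σ,τ]. Then for every ε > 0 with σ + ε ≤ τ - ε, and every t ∈ [σ+ε, τ-ε], one has |u'(t)| ≤ (u(t)/ε) · e^{|c|(τ-σ)}. -/
/-!
Multiplying the equation by `e^{ct}` gives `(e^{ct} u')' = -e^{ct} h(t,u) ≤ 0`, so `e^{ct} u'` is
non-increasing. By the mean value theorem on `[t-ε, t]` and `[t, t+ε]` and `u ≥ 0`, some point `ξ` of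
each interval has `u'(ξ) ≤ u(t)/ε`, respectively `u'(ξ) ≥ -u(t)/ε`; monotonicity of `e^{ct} u'`
carries these bounds to `t` at the cost of the factor `e^{c(ξ-t)} ≤ e^{|c|(τ-σ)}`.
-/

open Real Set

theorem antitoneOn_exp_mul_of_deriv_add_mul_nonpos {g : ℝ → ℝ} {D : Set ℝ} (c : ℝ)
    (hD : Convex ℝ D) (hg : Differentiable ℝ g)
    (hneg : ∀ s ∈ interior D, deriv g s + c * g s ≤ 0) :
    AntitoneOn (fun s => exp (c * s) * g s) D := by
  have hderiv : ∀ s, HasDerivAt (fun s => exp (c * s) * g s)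
      (exp (c * s) * (deriv g s + c * g s)) s := fun s => by
    have hexp : HasDerivAt (fun s => exp (c * s)) (exp (c * s) * c) s :=
      ((hasDerivAt_id s).const_mul c).exp.congr_deriv (by simp)
    exact (hexp.mul (hg s).hasDerivAt).congr_deriv (by ring)
  refine antitoneOn_of_deriv_nonpos hD
    (fun s _ => (hderiv s).continuousAt.continuousWithinAt)
    (fun s _ => (hderiv s).differentiableAt.differentiableWithinAt) fun s hs => ?_
  rw [(hderiv s).deriv]
  exact mul_nonpos_of_nonneg_of_nonpos (exp_pos _).le (hneg s hs)

theorem le_mul_exp_abs_of_exp_mul_le {a b c t ξ M L : ℝ}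
    (hmono : exp (c * t) * a ≤ exp (c * ξ) * b) (hb : b ≤ M) (hM : 0 ≤ M)
    (hdist : |ξ - t| ≤ L) :
    a ≤ M * exp (|c| * L) := by
  have hexp : exp (c * (ξ - t)) ≤ exp (|c| * L) := exp_le_exp.2 <|
    calc c * (ξ - t) ≤ |c| * |ξ - t| := (le_abs_self _).trans (abs_mul _ _).le
      _ ≤ |c| * L := mul_le_mul_of_nonneg_left hdist (abs_nonneg c)
  calc a = exp (-(c * t)) * (exp (c * t) * a) := by
        rw [← mul_assoc, ← exp_add, neg_add_cancel, exp_zero, one_mul]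
    _ ≤ exp (-(c * t)) * (exp (c * ξ) * b) := mul_le_mul_of_nonneg_left hmono (exp_pos _).le
    _ = exp (c * (ξ - t)) * b := by rw [← mul_assoc, ← exp_add]; ring_nf
    _ ≤ exp (c * (ξ - t)) * M := mul_le_mul_of_nonneg_left hb (exp_pos _).le
    _ ≤ exp (|c| * L) * M := mul_le_mul_of_nonneg_right hexp hM
    _ = M * exp (|c| * L) := mul_comm _ _

theorem exists_mem_Ioo_deriv_le_div_of_nonneg {u : ℝ → ℝ} {t ε : ℝ} (hu : Differentiable ℝ u)
    (hε : 0 < ε) (h0 : 0 ≤ u (t - ε)) :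
    ∃ ξ ∈ Ioo (t - ε) t, deriv u ξ ≤ u t / ε := by
  obtain ⟨ξ, hξ, hslope⟩ := exists_deriv_eq_slope u (sub_lt_self t hε)
    hu.continuous.continuousOn hu.differentiableOn
  refine ⟨ξ, hξ, ?_⟩
  rw [hslope, sub_sub_cancel]
  exact div_le_div_of_nonneg_right (by linarith) hε.le

theorem exists_mem_Ioo_neg_div_le_deriv_of_nonneg {u : ℝ → ℝ} {t ε : ℝ}
    (hu : Differentiable ℝ u) (hε : 0 < ε) (h0 : 0 ≤ u (t + ε)) :
    ∃ ξ ∈ Ioo t (t + ε), -(u t / ε) ≤ deriv u ξ := by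
  obtain ⟨ξ, hξ, hslope⟩ := exists_deriv_eq_slope u (lt_add_of_pos_right t hε)
    hu.continuous.continuousOn hu.differentiableOn
  refine ⟨ξ, hξ, ?_⟩
  rw [hslope, add_sub_cancel_left, ← neg_div]
  exact div_le_div_of_nonneg_right (by linarith) hε.le

theorem stmt2_general (σ τ c : ℝ)
    (h : ℝ → ℝ → ℝ)
    (hsign : ∀ t ∈ Set.Icc σ τ, ∀ s, 0 ≤ s → 0 ≤ h t s)
    (u : ℝ → ℝ) (hu : ContDiff ℝ 2 u) (hunn : ∀ t ∈ Set.Icc σ τ, 0 ≤ u t)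
    (hode : ∀ t ∈ Set.Icc σ τ, deriv (deriv u) t + c * deriv u t + h t (u t) = 0)
    (ε : ℝ) (hε : 0 < ε) (hεστ : σ + ε ≤ τ - ε) :
    ∀ t ∈ Set.Icc (σ + ε) (τ - ε),
      |deriv u t| ≤ u t / ε * Real.exp (|c| * (τ - σ)) := by
  rintro t ⟨ht₁, ht₂⟩
  have hdu : Differentiable ℝ u := hu.differentiable (by norm_num)
  have hdu' : Differentiable ℝ (deriv u) :=
    (hu.iterate_deriv' 1 1).differentiable one_ne_zero
  have hanti := antitoneOn_exp_mul_of_deriv_add_mul_nonpos c (convex_Icc σ τ) hdu' fun s hs => by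
    have hs' := interior_subset hs
    linarith [hode s hs', hsign s hs' (u s) (hunn s hs')]
  have hM : 0 ≤ u t / ε := div_nonneg (hunn t ⟨by linarith, by linarith⟩) hε.le
  have hnear : ∀ x ∈ Icc (t - ε) (t + ε), x ∈ Icc σ τ ∧ |x - t| ≤ τ - σ := fun x hx =>
    ⟨⟨by linarith [hx.1], by linarith [hx.2]⟩, abs_le.2 ⟨by linarith [hx.1], by linarith [hx.2]⟩⟩
  have htmem : t ∈ Icc σ τ := (hnear t ⟨by linarith, by linarith⟩).1
  obtain ⟨ξ, hξ, hξle⟩ := exists_mem_Ioo_deriv_le_div_of_nonneg hdu hε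
    (hunn _ (hnear _ ⟨le_rfl, by linarith⟩).1)
  obtain ⟨hξmem, hξdist⟩ := hnear ξ ⟨hξ.1.le, by linarith [hξ.2]⟩
  obtain ⟨η, hη, hηge⟩ := exists_mem_Ioo_neg_div_le_deriv_of_nonneg hdu hε
    (hunn _ (hnear _ ⟨by linarith, le_rfl⟩).1)
  obtain ⟨hηmem, hηdist⟩ := hnear η ⟨by linarith [hη.1], hη.2.le⟩
  have hupper := le_mul_exp_abs_of_exp_mul_le (hanti hξmem htmem hξ.2.le) hξle hM hξdist
  have hlower := le_mul_exp_abs_of_exp_mul_le (a := -deriv u t) (b := -deriv u η)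
    (by linarith [hanti htmem hηmem hη.1.le]) (by linarith) hM hηdist
  exact abs_le.2 ⟨by linarith, hupper⟩

theorem stmt2 (σ τ c : ℝ) (hστ : σ < τ)
    (h : ℝ → ℝ → ℝ) (hh : Continuous fun p : ℝ × ℝ => h p.1 p.2)
    (hsign : ∀ t ∈ Set.Icc σ τ, ∀ s, 0 ≤ s → 0 ≤ h t s)
    (u : ℝ → ℝ) (hu : ContDiff ℝ 2 u) (hunn : ∀ t ∈ Set.Icc σ τ, 0 ≤ u t)
    (hode : ∀ t ∈ Set.Icc σ τ, deriv (deriv u) t + c * deriv u t + h t (u t) = 0)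
    (ε : ℝ) (hε : 0 < ε) (hεστ : σ + ε ≤ τ - ε) :
    ∀ t ∈ Set.Icc (σ + ε) (τ - ε),
      |deriv u t| ≤ u t / ε * Real.exp (|c| * (τ - σ)) :=
  stmt2_general σ τ c h hsign u hu hunn hode ε hε hεστ
end

section
/- Let u be a nonnegative C^2 T-periodic solution of u'' + c u' + λ a(t) g(u) + α = 0 with max over I = [σ,τ] of u equal to ρ, where a ≥ 0 on I. Set σ₀ = σ+ε, τ₀ = τ-ε with σ₀ < τ₀. Then min over [σ₀,τ₀] of u is at least δρ, where δ = ε/(ε + e^{2|c|T} T). -/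
/-!
Along `I` the equation gives `(e^{ct} u')' = -e^{ct} (λ a g(u) + α) ≤ 0`, so `e^{ct} u'` is
nonincreasing there and `u'` changes on `I` by a factor at most `K = e^{|c|T}`. At a point `t` of
`[σ₀, τ₀]` with `u'(t) ≥ 0` this bounds `u'` below by `u'(t)/K` on `[t - ε, t]`, so that
`ε u'(t) ≤ K u(t)` as `u ≥ 0`, and above by `K u'(t)` on `[t, τ]`, so that `ρ - u(t) ≤ K T u'(t)`
when the maximum is attained to the right of `t` (and `ρ ≤ u(t)` otherwise). Together these give
`ε ρ ≤ (ε + K² T) u(t)`. The case `u'(t) ≤ 0` is its mirror image under `t ↦ -t`, `c ↦ -c`.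
-/

open Real Set

lemma mul_sub_le_image_sub_of_le_deriv_Icc {f : ℝ → ℝ} (hf : Differentiable ℝ f) {a b C : ℝ}
    (hab : a ≤ b) (h : ∀ x ∈ Icc a b, C ≤ deriv f x) : C * (b - a) ≤ f b - f a :=
  (convex_Icc a b).mul_sub_le_image_sub_of_le_deriv hf.continuous.continuousOn
    hf.differentiableOn (fun x hx => h x (interior_subset hx)) a (left_mem_Icc.2 hab) b
    (right_mem_Icc.2 hab) hab

lemma image_sub_le_mul_sub_of_deriv_le_Icc {f : ℝ → ℝ} (hf : Differentiable ℝ f) {a b C : ℝ}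
    (hab : a ≤ b) (h : ∀ x ∈ Icc a b, deriv f x ≤ C) : f b - f a ≤ C * (b - a) :=
  (convex_Icc a b).image_sub_le_mul_sub_of_deriv_le hf.continuous.continuousOn
    hf.differentiableOn (fun x hx => h x (interior_subset hx)) a (left_mem_Icc.2 hab) b
    (right_mem_Icc.2 hab) hab

lemma antitoneOn_exp_mul_deriv {u : ℝ → ℝ} {c : ℝ} {D : Set ℝ} (hD : Convex ℝ D)
    (hu : Differentiable ℝ (deriv u))
    (h : ∀ x ∈ D, deriv (deriv u) x + c * deriv u x ≤ 0) :
    AntitoneOn (fun x => exp (c * x) * deriv u x) D := by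
  have hderiv : ∀ x, HasDerivAt (fun x => exp (c * x) * deriv u x)
      (exp (c * x) * (deriv (deriv u) x + c * deriv u x)) x := fun x => by
    refine (((hasDerivAt_id x).const_mul c).exp.mul (hu x).hasDerivAt).congr_deriv ?_
    simp only [id, mul_one]
    ring
  refine antitoneOn_of_deriv_nonpos hD (fun x _ => (hderiv x).continuousAt.continuousWithinAt)
    (fun x _ => (hderiv x).differentiableAt.differentiableWithinAt) fun x hx => ?_
  rw [(hderiv x).deriv]
  exact mul_nonpos_of_nonneg_of_nonpos (exp_pos _).le (h x (interior_subset hx))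

section

variable {u : ℝ → ℝ} {c σ τ L : ℝ}

lemma abs_mul_sub_le_of_mem_Icc {s t : ℝ} (hs : s ∈ Icc σ τ) (ht : t ∈ Icc σ τ)
    (hL : τ - σ ≤ L) : |c * (t - s)| ≤ |c| * L := by
  rw [abs_mul]
  exact mul_le_mul_of_nonneg_left
    (abs_sub_le_iff.2 ⟨by linarith [hs.1, ht.2], by linarith [hs.2, ht.1]⟩) (abs_nonneg c)

lemma exp_mul_sub_mul_deriv_le_deriv
    (hw : AntitoneOn (fun x => exp (c * x) * deriv u x) (Icc σ τ))
    {s t : ℝ} (hs : s ∈ Icc σ τ) (ht : t ∈ Icc σ τ) (hst : s ≤ t) :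
    exp (c * (t - s)) * deriv u t ≤ deriv u s := by
  rw [← mul_le_mul_iff_right₀ (exp_pos (c * s)), ← mul_assoc, ← exp_add]
  convert hw hs ht hst using 3
  ring

lemma deriv_le_exp_mul_sub_mul_deriv
    (hw : AntitoneOn (fun x => exp (c * x) * deriv u x) (Icc σ τ))
    {s t : ℝ} (hs : s ∈ Icc σ τ) (ht : t ∈ Icc σ τ) (hts : t ≤ s) :
    deriv u s ≤ exp (c * (t - s)) * deriv u t := by
  rw [← mul_le_mul_iff_right₀ (exp_pos (c * s)), ← mul_assoc, ← exp_add]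
  convert hw ht hs hts using 3
  ring

lemma harnack_of_antitoneOn_exp_mul_deriv_of_deriv_nonneg (hu : Differentiable ℝ u)
    (hw : AntitoneOn (fun x => exp (c * x) * deriv u x) (Icc σ τ)) (hL : τ - σ ≤ L)
    (hnn : ∀ x ∈ Icc σ τ, 0 ≤ u x) {ε t t₀ : ℝ} (hε : 0 < ε)
    (ht : t ∈ Icc (σ + ε) (τ - ε)) (ht₀ : t₀ ∈ Icc σ τ) (hut : 0 ≤ deriv u t) :
    ε * u t₀ ≤ (ε + exp (2 * |c| * L) * L) * u t := by
  have htI : t ∈ Icc σ τ := ⟨by linarith [ht.1], by linarith [ht.2]⟩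
  have hL0 : 0 ≤ L := by linarith [ht.1, ht.2]
  have hlower : ∀ s ∈ Icc σ t, exp (-(|c| * L)) * deriv u t ≤ deriv u s := fun s hs => by
    have hsI : s ∈ Icc σ τ := ⟨hs.1, hs.2.trans htI.2⟩
    refine le_trans ?_ (exp_mul_sub_mul_deriv_le_deriv hw hsI htI hs.2)
    gcongr
    exact neg_le_of_abs_le (abs_mul_sub_le_of_mem_Icc hsI htI hL)
  have hupper : ∀ s ∈ Icc t τ, deriv u s ≤ exp (|c| * L) * deriv u t := fun s hs => by
    have hsI : s ∈ Icc σ τ := ⟨htI.1.trans hs.1, hs.2⟩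
    refine (deriv_le_exp_mul_sub_mul_deriv hw hsI htI hs.1).trans ?_
    exact mul_le_mul_of_nonneg_right
      (exp_le_exp.2 (le_of_abs_le (abs_mul_sub_le_of_mem_Icc hsI htI hL))) hut
  rcases le_total t₀ t with h | h
  · have hmono : u t₀ ≤ u t := by
      have := mul_sub_le_image_sub_of_le_deriv_Icc hu h
        fun s hs => hlower s ⟨ht₀.1.trans hs.1, hs.2⟩
      nlinarith [mul_nonneg (mul_nonneg (exp_pos (-(|c| * L))).le hut) (sub_nonneg.2 h)]
    have := hnn t htI
    have : 0 ≤ exp (2 * |c| * L) * L * u t := by positivity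
    nlinarith
  · have hgrad : exp (-(|c| * L)) * deriv u t * ε ≤ u t := by
      have hmvt := mul_sub_le_image_sub_of_le_deriv_Icc hu (by linarith : t - ε ≤ t)
        fun s hs => hlower s ⟨by linarith [ht.1, hs.1], hs.2⟩
      rw [sub_sub_cancel] at hmvt
      linarith [hnn (t - ε) ⟨by linarith [ht.1], by linarith [ht.2]⟩]
    have hgrowth : u t₀ - u t ≤ exp (|c| * L) * deriv u t * L :=
      (image_sub_le_mul_sub_of_deriv_le_Icc hu h
        fun s hs => hupper s ⟨hs.1, hs.2.trans ht₀.2⟩).trans (by gcongr; linarith [ht₀.2, htI.1])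
    set K := exp (|c| * L)
    have hKK : exp (2 * |c| * L) = K * K := by rw [← exp_add]; ring_nf
    have hKinv : K * exp (-(|c| * L)) = 1 := by rw [← exp_add]; simp
    calc ε * u t₀ = ε * u t + ε * (u t₀ - u t) := by ring
      _ ≤ ε * u t + ε * (K * deriv u t * L) := by gcongr
      _ = ε * u t + K * L * (K * (exp (-(|c| * L)) * deriv u t * ε)) := by
        linear_combination (-ε * K * deriv u t * L) * hKinv
      _ ≤ ε * u t + K * L * (K * u t) := by gcongr
      _ = _ := by rw [hKK]; ring

lemma antitoneOn_exp_mul_deriv_comp_neg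
    (hw : AntitoneOn (fun x => exp (c * x) * deriv u x) (Icc σ τ)) :
    AntitoneOn (fun x => exp (-c * x) * deriv (fun y => u (-y)) x) (Icc (-τ) (-σ)) := by
  intro x hx y hy hxy
  have := hw (neg_mem_Icc_iff.2 hy) (neg_mem_Icc_iff.2 hx) (neg_le_neg hxy)
  simp only [deriv_comp_neg, neg_mul, mul_neg] at this ⊢
  linarith

lemma harnack_of_antitoneOn_exp_mul_deriv (hu : Differentiable ℝ u)
    (hw : AntitoneOn (fun x => exp (c * x) * deriv u x) (Icc σ τ)) (hL : τ - σ ≤ L)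
    (hnn : ∀ x ∈ Icc σ τ, 0 ≤ u x) {ε t t₀ : ℝ} (hε : 0 < ε)
    (ht : t ∈ Icc (σ + ε) (τ - ε)) (ht₀ : t₀ ∈ Icc σ τ) :
    ε * u t₀ ≤ (ε + exp (2 * |c| * L) * L) * u t := by
  rcases le_total 0 (deriv u t) with hut | hut
  · exact harnack_of_antitoneOn_exp_mul_deriv_of_deriv_nonneg hu hw hL hnn hε ht ht₀ hut
  · have := harnack_of_antitoneOn_exp_mul_deriv_of_deriv_nonneg (u := fun x => u (-x))
      (t := -t) (t₀ := -t₀) (L := L) (hu.comp differentiable_neg)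
      (antitoneOn_exp_mul_deriv_comp_neg hw) (by linarith)
      (fun x hx => hnn (-x) (neg_mem_Icc_iff.2 hx)) hε ⟨by linarith [ht.2], by linarith [ht.1]⟩
      ⟨by linarith [ht₀.2], by linarith [ht₀.1]⟩ (by rw [deriv_comp_neg, neg_neg]; linarith)
    simpa only [neg_neg, abs_neg] using this

end

theorem stmt4_general (T c lam α ε σ τ ρ : ℝ) (hT : 0 < T) (hlam : 0 < lam) (hα : 0 ≤ α)
    (hε : 0 < ε) (hσ : 0 ≤ σ) (hτ : τ ≤ T)
    (a : ℝ → ℝ)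
    (hapos : ∀ t ∈ Set.Icc σ τ, 0 ≤ a t)
    (g : ℝ → ℝ) (hgnn : ∀ s, 0 ≤ s → 0 ≤ g s)
    (u : ℝ → ℝ) (hu : ContDiff ℝ 2 u) (hunn : ∀ t, 0 ≤ u t)
    (hode : ∀ t, deriv (deriv u) t + c * deriv u t + lam * a t * g (u t) + α = 0)
    (hmaxeq : ∃ t₀ ∈ Set.Icc σ τ, u t₀ = ρ) :
    ∀ t ∈ Set.Icc (σ + ε) (τ - ε),
      ε / (ε + Real.exp (2 * |c| * T) * T) * ρ ≤ u t := by
  intro t ht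
  obtain ⟨t₀, ht₀, rfl⟩ := hmaxeq
  have hu' : Differentiable ℝ (deriv u) :=
    ((contDiff_succ_iff_deriv (n := 1)).mp hu).2.2.differentiable (by norm_num)
  have hw : AntitoneOn (fun x => exp (c * x) * deriv u x) (Icc σ τ) :=
    antitoneOn_exp_mul_deriv (convex_Icc σ τ) hu' fun x hx => by
      have := mul_nonneg (mul_nonneg hlam.le (hapos x hx)) (hgnn _ (hunn x))
      linarith [hode x]
  rw [div_mul_eq_mul_div, div_le_iff₀ (by positivity), mul_comm (u t)]
  exact harnack_of_antitoneOn_exp_mul_deriv (hu.differentiable (by norm_num)) hw (by linarith)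
    (fun x _ => hunn x) hε ht ht₀

theorem stmt4 (T c lam α ε σ τ ρ : ℝ) (hT : 0 < T) (hlam : 0 < lam) (hα : 0 ≤ α)
    (hε : 0 < ε) (hσ : 0 ≤ σ) (hτ : τ ≤ T) (hord : σ + ε < τ - ε) (hρ : 0 < ρ)
    (a : ℝ → ℝ) (ha : Continuous a) (haP : Function.Periodic a T)
    (hapos : ∀ t ∈ Set.Icc σ τ, 0 ≤ a t)
    (g : ℝ → ℝ) (hg : Continuous g) (hgnn : ∀ s, 0 ≤ s → 0 ≤ g s)
    (u : ℝ → ℝ) (hu : ContDiff ℝ 2 u) (huP : Function.Periodic u T) (hunn : ∀ t, 0 ≤ u t)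
    (hode : ∀ t, deriv (deriv u) t + c * deriv u t + lam * a t * g (u t) + α = 0)
    (hmaxle : ∀ t ∈ Set.Icc σ τ, u t ≤ ρ) (hmaxeq : ∃ t₀ ∈ Set.Icc σ τ, u t₀ = ρ) :
    ∀ t ∈ Set.Icc (σ + ε) (τ - ε),
      ε / (ε + Real.exp (2 * |c| * T) * T) * ρ ≤ u t :=
  stmt4_general T c lam α ε σ τ ρ hT hlam hα hε hσ hτ a hapos g hgnn u hu hunn hode hmaxeq
end

section
/- Let u be a nonnegative C^2 T-periodic solution of u'' + c u' + λ a(t) g(u) + α = 0 with α ≥ 0, a ≥ 0 on I = [σ,τ] and maxₜ∈I u ≤ ρ, where σ₀ = σ+ε < τ-ε = τ₀. Then α(τ₀ - σ₀) ≤ 2ρe^{|c|T}/ε + 2|c|ρ. In particular, for α > (2ρe^{|c|T}/ε + 2|c|ρ)/(τ₀-σ₀), no such solution exists. -/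
/-!
Along the equation, `(u' + c u)' = u'' + c u' ≤ -α` on `I`, so integrating over `[σ₀, τ₀]` bounds
`α (τ₀ - σ₀)` by the boundary values of `u' + c u`. The terms `c u` are at most `|c| ρ`. For `u'`,
the integrating factor makes `e^{ct} u'(t)` nonincreasing on `I`; comparing `u'(t)` with a
mean-value slope `|u'(ξ)| ≤ ρ / ε` taken on `[t, t + ε]` or `[t - ε, t]` gives
`|u'(t)| ≤ ρ e^{|c| ε} / ε` on `[σ₀, τ₀]`.
-/

open Real Set

theorem antitoneOn_exp_mul_of_deriv_add_mul_nonpos_s6 {f : ℝ → ℝ} {c σ τ : ℝ}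
    (hf : Differentiable ℝ f) (h : ∀ t ∈ Ioo σ τ, deriv f t + c * f t ≤ 0) :
    AntitoneOn (fun t => exp (c * t) * f t) (Icc σ τ) := by
  have hderiv : ∀ t, HasDerivAt (fun t => exp (c * t) * f t)
      (exp (c * t) * (deriv f t + c * f t)) t := fun t => by
    have hexp : HasDerivAt (fun t => exp (c * t)) (exp (c * t) * c) t := by
      simpa using ((hasDerivAt_id t).const_mul c).exp
    exact (hexp.fun_mul (hf t).hasDerivAt).congr_deriv (by ring)
  refine antitoneOn_of_deriv_nonpos (convex_Icc σ τ)
    (fun t _ => (hderiv t).continuousAt.continuousWithinAt)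
    (fun t _ => (hderiv t).differentiableAt.differentiableWithinAt) fun t ht => ?_
  rw [interior_Icc] at ht
  rw [(hderiv t).deriv]
  exact mul_nonpos_of_nonneg_of_nonpos (exp_pos _).le (h t ht)

theorem exists_abs_deriv_le_div {u : ℝ → ℝ} {a b ρ : ℝ} (hu : Differentiable ℝ u) (hab : a < b)
    (ha : u a ∈ Icc 0 ρ) (hb : u b ∈ Icc 0 ρ) : ∃ ξ ∈ Ioo a b, |deriv u ξ| ≤ ρ / (b - a) := by
  obtain ⟨ξ, hξ, hslope⟩ := exists_deriv_eq_slope u hab hu.continuous.continuousOn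
    hu.differentiableOn
  refine ⟨ξ, hξ, ?_⟩
  rw [hslope, abs_div, abs_of_pos (sub_pos.mpr hab)]
  gcongr
  exact abs_sub_le_iff.mpr ⟨by linarith [ha.1, hb.2], by linarith [ha.2, hb.1]⟩

theorem exp_mul_mul_eq_exp_mul_mul_exp_mul_sub (c s t y : ℝ) :
    exp (c * s) * y = exp (c * t) * (exp (c * (s - t)) * y) := by
  rw [← mul_assoc, ← exp_add]
  ring_nf

theorem abs_exp_mul_mul_le {c x y ε r : ℝ} (hx : |x| ≤ ε) (hy : |y| ≤ r) :
    |exp (c * x) * y| ≤ exp (|c| * ε) * r := by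
  have hcx : c * x ≤ |c| * ε := calc
    c * x ≤ |c| * |x| := (le_abs_self _).trans (abs_mul c x).le
    _ ≤ |c| * ε := by gcongr
  rw [abs_mul, abs_of_pos (exp_pos _)]
  gcongr

theorem abs_deriv_le_of_antitoneOn_exp_mul {u : ℝ → ℝ} {c ρ ε σ τ t : ℝ}
    (hu : Differentiable ℝ u) (hε : 0 < ε)
    (hanti : AntitoneOn (fun t => exp (c * t) * deriv u t) (Icc σ τ))
    (hbound : ∀ t ∈ Icc σ τ, u t ∈ Icc 0 ρ) (ht : t ∈ Icc (σ + ε) (τ - ε)) :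
    |deriv u t| ≤ ρ * exp (|c| * ε) / ε := by
  have hmem : ∀ s, |s - t| ≤ ε → s ∈ Icc σ τ := fun s hs => by
    obtain ⟨h₁, h₂⟩ := abs_sub_le_iff.mp hs
    exact ⟨by linarith [ht.1], by linarith [ht.2]⟩
  have hcompare : ∀ ξ, |ξ - t| ≤ ε → |deriv u ξ| ≤ ρ / ε →
      |exp (c * (ξ - t)) * deriv u ξ| ≤ ρ * exp (|c| * ε) / ε := fun ξ hξ hξ' => by
    rw [mul_comm ρ, mul_div_assoc]
    exact abs_exp_mul_mul_le hξ hξ'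
  have hself : |t - t| ≤ ε := by rw [sub_self, abs_zero]; exact hε.le
  rw [abs_le]
  constructor
  · obtain ⟨ξ, hξ, hslope⟩ := exists_abs_deriv_le_div hu (lt_add_of_pos_right t hε)
      (hbound t (hmem t hself)) (hbound _ (hmem (t + ε) (by simp [abs_of_pos hε])))
    rw [add_sub_cancel_left] at hslope
    have hdist : |ξ - t| ≤ ε := abs_sub_le_iff.mpr ⟨by linarith [hξ.2], by linarith [hξ.1]⟩
    have hmono : exp (c * ξ) * deriv u ξ ≤ exp (c * t) * deriv u t :=
      hanti (hmem t hself) (hmem ξ hdist) hξ.1.le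
    rw [exp_mul_mul_eq_exp_mul_mul_exp_mul_sub c ξ t] at hmono
    linarith [(mul_le_mul_iff_of_pos_left (exp_pos (c * t))).mp hmono,
      (abs_le.mp (hcompare ξ hdist hslope)).1]
  · obtain ⟨ξ, hξ, hslope⟩ := exists_abs_deriv_le_div hu (sub_lt_self t hε)
      (hbound _ (hmem (t - ε) (by simp [abs_of_pos hε]))) (hbound t (hmem t hself))
    rw [sub_sub_cancel] at hslope
    have hdist : |ξ - t| ≤ ε := abs_sub_le_iff.mpr ⟨by linarith [hξ.2], by linarith [hξ.1]⟩
    have hmono : exp (c * t) * deriv u t ≤ exp (c * ξ) * deriv u ξ :=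
      hanti (hmem ξ hdist) (hmem t hself) hξ.2.le
    rw [exp_mul_mul_eq_exp_mul_mul_exp_mul_sub c ξ t] at hmono
    linarith [(mul_le_mul_iff_of_pos_left (exp_pos (c * t))).mp hmono,
      (abs_le.mp (hcompare ξ hdist hslope)).2]

theorem mul_sub_le_of_deriv_deriv_add_mul_deriv_le {u : ℝ → ℝ} {c α a b : ℝ}
    (hu : Differentiable ℝ u) (hu' : Differentiable ℝ (deriv u)) (hab : a ≤ b)
    (h : ∀ t ∈ Ioo a b, deriv (deriv u) t + c * deriv u t ≤ -α) :
    α * (b - a) ≤ (deriv u a + c * u a) - (deriv u b + c * u b) := by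
  have hderiv : ∀ t, HasDerivAt (fun t => deriv u t + c * u t)
      (deriv (deriv u) t + c * deriv u t) t :=
    fun t => (hu' t).hasDerivAt.add ((hu t).hasDerivAt.const_mul c)
  have := (convex_Icc a b).image_sub_le_mul_sub_of_deriv_le
    (fun t _ => (hderiv t).continuousAt.continuousWithinAt)
    (fun t _ => (hderiv t).differentiableAt.differentiableWithinAt)
    (fun t ht => by rw [interior_Icc] at ht; rw [(hderiv t).deriv]; exact h t ht)
    a (left_mem_Icc.2 hab) b (right_mem_Icc.2 hab) hab
  linarith

theorem stmt6_general (T c lam α ε σ τ ρ : ℝ) (hlam : 0 < lam) (hα : 0 ≤ α)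
    (hε : 0 < ε) (hσ : 0 ≤ σ) (hτ : τ ≤ T) (hord : σ + ε < τ - ε) (hρ : 0 ≤ ρ)
    (a : ℝ → ℝ)
    (hapos : ∀ t ∈ Set.Icc σ τ, 0 ≤ a t)
    (g : ℝ → ℝ) (hgnn : ∀ s, 0 ≤ s → 0 ≤ g s)
    (u : ℝ → ℝ) (hu : ContDiff ℝ 2 u) (hunn : ∀ t, 0 ≤ u t)
    (hode : ∀ t, deriv (deriv u) t + c * deriv u t + lam * a t * g (u t) + α = 0)
    (hmaxle : ∀ t ∈ Set.Icc σ τ, u t ≤ ρ) :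
    α * ((τ - ε) - (σ + ε)) ≤ 2 * ρ * Real.exp (|c| * T) / ε + 2 * |c| * ρ := by
  have hu₁ : Differentiable ℝ u := hu.differentiable two_ne_zero
  have hu₂ : Differentiable ℝ (deriv u) := (hu.deriv' (n := 1)).differentiable one_ne_zero
  have hdamped : ∀ t ∈ Icc σ τ, deriv (deriv u) t + c * deriv u t ≤ -α := fun t ht => by
    have := mul_nonneg (mul_nonneg hlam.le (hapos t ht)) (hgnn _ (hunn t))
    linarith [hode t]
  have hanti := antitoneOn_exp_mul_of_deriv_add_mul_nonpos_s6 hu₂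
    fun t ht => (hdamped t (Ioo_subset_Icc_self ht)).trans (neg_nonpos.2 hα)
  have hderiv : ∀ t ∈ Icc (σ + ε) (τ - ε), |deriv u t| ≤ ρ * exp (|c| * T) / ε := fun t ht =>
    (abs_deriv_le_of_antitoneOn_exp_mul hu₁ hε hanti (fun s hs => ⟨hunn s, hmaxle s hs⟩) ht).trans
      (by gcongr; linarith)
  have hcu : ∀ t ∈ Icc σ τ, |c * u t| ≤ |c| * ρ := fun t ht => by
    rw [abs_mul, abs_of_nonneg (hunn t)]
    exact mul_le_mul_of_nonneg_left (hmaxle t ht) (abs_nonneg c)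
  have hσ₀ := abs_le.mp (hderiv _ (left_mem_Icc.2 hord.le))
  have hτ₀ := abs_le.mp (hderiv _ (right_mem_Icc.2 hord.le))
  have hcσ₀ := abs_le.mp (hcu (σ + ε) ⟨by linarith, by linarith⟩)
  have hcτ₀ := abs_le.mp (hcu (τ - ε) ⟨by linarith, by linarith⟩)
  have hintegrated := mul_sub_le_of_deriv_deriv_add_mul_deriv_le hu₁ hu₂ hord.le fun t ht =>
    hdamped t ⟨by linarith [ht.1], by linarith [ht.2]⟩
  have hrhs : 2 * ρ * exp (|c| * T) / ε = 2 * (ρ * exp (|c| * T) / ε) := by ring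
  linarith

theorem stmt6 (T c lam α ε σ τ ρ : ℝ) (hT : 0 < T) (hlam : 0 < lam) (hα : 0 ≤ α)
    (hε : 0 < ε) (hσ : 0 ≤ σ) (hτ : τ ≤ T) (hord : σ + ε < τ - ε) (hρ : 0 ≤ ρ)
    (a : ℝ → ℝ) (ha : Continuous a) (haP : Function.Periodic a T)
    (hapos : ∀ t ∈ Set.Icc σ τ, 0 ≤ a t)
    (g : ℝ → ℝ) (hg : Continuous g) (hgnn : ∀ s, 0 ≤ s → 0 ≤ g s)
    (u : ℝ → ℝ) (hu : ContDiff ℝ 2 u) (huP : Function.Periodic u T) (hunn : ∀ t, 0 ≤ u t)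
    (hode : ∀ t, deriv (deriv u) t + c * deriv u t + lam * a t * g (u t) + α = 0)
    (hmaxle : ∀ t ∈ Set.Icc σ τ, u t ≤ ρ) :
    α * ((τ - ε) - (σ + ε)) ≤ 2 * ρ * Real.exp (|c| * T) / ε + 2 * |c| * ρ :=
  stmt6_general T c lam α ε σ τ ρ hlam hα hε hσ hτ hord hρ a hapos g hgnn u hu hunn hode hmaxle
end

section
/- Let z : [0,T] → ℝ be C^1, T-periodic (z(0) = z(T)), with z(t*) = 0 for some t*, satisfying z' + c z = -b(t) z² - a(t) where |b(t)| ≤ νD for all t. Fix M > e^{|c|T}‖a‖_{L¹} and suppose νD < (M - e^{|c|T}‖a‖_{L¹})/(M² T e^{|c|T}). Then ‖z‖_∞ ≤ M. -/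
/-!
Multiplying the equation by `exp (c t)` gives `(exp (c t) z t)' = exp (c t) (-b z² - a)`.
Integrating from the zero `t₀` of `z` shows that, as long as `|z| ≤ M` between `t₀` and `u`,
`|z u| ≤ exp (|c| T) (ν D M² T + ‖a‖₁)`, which is `< M` by the smallness assumption; so by
continuity `|z|` can never climb above `M` on `[0, T]`.
-/

open Real Set MeasureTheory Filter Topology
open scoped Interval

theorem integral_exp_mul_mul_deriv_add_mul {z : ℝ → ℝ} (hz : ContDiff ℝ 1 z) (c a b : ℝ) :
    ∫ s in a..b, exp (c * s) * (deriv z s + c * z s) = exp (c * b) * z b - exp (c * a) * z a := by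
  have hz' : Continuous (deriv z) := hz.continuous_deriv le_rfl
  have hcont : Continuous fun s => exp (c * s) * (deriv z s + c * z s) := by fun_prop
  refine intervalIntegral.integral_eq_sub_of_hasDerivAt (f := fun s => exp (c * s) * z s)
    (fun s _ => ?_) (hcont.intervalIntegrable _ _)
  refine (((hasDerivAt_id s).const_mul c).exp.mul
    ((hz.differentiable one_ne_zero) s).hasDerivAt).congr_deriv ?_
  simp only [id]
  ring

theorem exp_mul_le_exp_mul_mul_exp_of_abs_sub_le {c s u T : ℝ} (h : |s - u| ≤ T) :
    exp (c * s) ≤ exp (c * u) * exp (|c| * T) := by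
  rw [← exp_add, exp_le_exp]
  have : c * (s - u) ≤ |c| * T :=
    calc c * (s - u) ≤ |c| * |s - u| := (le_abs_self _).trans (abs_mul _ _).le
      _ ≤ |c| * T := by gcongr
  linarith

theorem abs_intervalIntegral_le_integral_of_mem_Icc {f g : ℝ → ℝ} {a b p q : ℝ}
    (ha : a ∈ Icc p q) (hb : b ∈ Icc p q) (hg : IntervalIntegrable g volume p q)
    (hg0 : ∀ x ∈ Icc p q, 0 ≤ g x) (hfg : ∀ x ∈ uIcc a b, |f x| ≤ g x) :
    |∫ x in a..b, f x| ≤ ∫ x in p..q, g x := by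
  have hpq : p ≤ q := ha.1.trans ha.2
  have hsub : Ι a b ⊆ Ι p q := by
    rw [uIoc_of_le hpq]
    exact Ioc_subset_Ioc (le_min ha.1 hb.1) (max_le ha.2 hb.2)
  have hg0' : 0 ≤ᵐ[volume.restrict (Ι p q)] g := by
    rw [uIoc_of_le hpq]
    exact (ae_restrict_iff' measurableSet_Ioc).2
      (.of_forall fun x hx => hg0 x (Ioc_subset_Icc_self hx))
  have hgab : IntervalIntegrable g volume a b :=
    hg.mono_set (uIcc_subset_uIcc (by rwa [uIcc_of_le hpq]) (by rwa [uIcc_of_le hpq]))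
  calc |∫ x in a..b, f x|
      ≤ |∫ x in a..b, g x| := by
        simpa only [Real.norm_eq_abs] using intervalIntegral.norm_integral_le_abs_of_norm_le
          (f := f) ((ae_restrict_iff' measurableSet_uIoc).2
            (.of_forall fun x hx => hfg x (uIoc_subset_uIcc hx))) hgab
    _ ≤ |∫ x in p..q, g x| := intervalIntegral.abs_integral_mono_interval hsub hg0' hg
    _ = ∫ x in p..q, g x := abs_of_nonneg (intervalIntegral.integral_nonneg hpq hg0)

theorem ContinuousOn.le_of_bootstrap {g : ℝ → ℝ} {a b R M : ℝ}
    (hg : ContinuousOn g (Icc a b)) (hRM : R < M) (ha : g a ≤ M)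
    (h : ∀ u ∈ Icc a b, (∀ s ∈ Icc a u, g s ≤ M) → g u ≤ R) :
    ∀ u ∈ Icc a b, g u ≤ M := by
  have hclosed : IsClosed ({x | g x ≤ M} ∩ Icc a b) := by
    rw [inter_comm]
    exact hg.preimage_isClosed_of_isClosed isClosed_Icc isClosed_Iic
  refine fun u hu =>
    hclosed.Icc_subset_of_forall_mem_nhdsGT_of_Icc_subset ha (fun t ht hat => ?_) hu
  have hlt : g t < M := (h t (Ico_subset_Icc_self ht) hat).trans_lt hRM
  have hnear : ∀ᶠ x in 𝓝[Icc a b] t, g x < M :=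
    (hg t (Ico_subset_Icc_self ht)).eventually (Iio_mem_nhds hlt)
  exact nhdsWithin_le_of_mem (Icc_mem_nhdsGT_of_mem ht) (hnear.mono fun _ => le_of_lt)

theorem ContinuousOn.le_of_bootstrap_uIcc {g : ℝ → ℝ} {p q t₀ R M : ℝ}
    (hg : ContinuousOn g (Icc p q)) (ht₀ : t₀ ∈ Icc p q) (hRM : R < M) (h0 : g t₀ ≤ M)
    (h : ∀ u ∈ Icc p q, (∀ s ∈ uIcc t₀ u, g s ≤ M) → g u ≤ R) :
    ∀ u ∈ Icc p q, g u ≤ M := by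
  intro u hu
  rcases le_total t₀ u with htu | hut
  · refine (hg.mono (Icc_subset_Icc_left ht₀.1)).le_of_bootstrap hRM h0 (fun v hv hle => ?_) u
      ⟨htu, hu.2⟩
    exact h v ⟨ht₀.1.trans hv.1, hv.2⟩ (by rwa [uIcc_of_le hv.1])
  · have hg' : ContinuousOn (fun x => g (-x)) (Icc (-t₀) (-p)) :=
      hg.comp continuousOn_neg fun x hx => ⟨le_neg.1 hx.2, (neg_le.1 hx.1).trans ht₀.2⟩
    refine neg_neg u ▸ hg'.le_of_bootstrap hRM (by rwa [neg_neg]) (fun v hv hle => ?_) (-u)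
      ⟨neg_le_neg hut, neg_le_neg hu.1⟩
    refine h (-v) ⟨le_neg.1 hv.2, (neg_le.1 hv.1).trans ht₀.2⟩ fun s hs => ?_
    rw [uIcc_of_ge (neg_le.1 hv.1)] at hs
    simpa using hle (-s) ⟨neg_le_neg hs.2, neg_le.1 hs.1⟩

theorem abs_le_of_riccati {z a b : ℝ → ℝ} {c K M T t₀ u : ℝ} (hz : ContDiff ℝ 1 z)
    (ha : Continuous a) (hbK : ∀ t ∈ Icc 0 T, |b t| ≤ K)
    (hode : ∀ t ∈ Icc 0 T, deriv z t + c * z t = -b t * z t ^ 2 - a t)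
    (ht₀ : t₀ ∈ Icc 0 T) (hz0 : z t₀ = 0) (hu : u ∈ Icc 0 T)
    (hzM : ∀ s ∈ uIcc t₀ u, |z s| ≤ M) :
    |z u| ≤ exp (|c| * T) * (K * M ^ 2 * T + ∫ t in 0..T, |a t|) := by
  set E := exp (|c| * T)
  have hK0 : 0 ≤ K := (abs_nonneg _).trans (hbK t₀ ht₀)
  have hsub : uIcc t₀ u ⊆ Icc 0 T := uIcc_subset_Icc ht₀ hu
  have hpt : ∀ s ∈ uIcc t₀ u,
      |exp (c * s) * (deriv z s + c * z s)| ≤ exp (c * u) * (E * (K * M ^ 2 + |a s|)) := by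
    intro s hs
    have hs' := hsub hs
    have hexp : exp (c * s) ≤ exp (c * u) * E :=
      exp_mul_le_exp_mul_mul_exp_of_abs_sub_le
        (abs_sub_le_iff.2 ⟨by linarith [hs'.2, hu.1], by linarith [hs'.1, hu.2]⟩)
    have hK : |b s| * |z s| ^ 2 ≤ K * M ^ 2 :=
      mul_le_mul (hbK s hs') (pow_le_pow_left₀ (abs_nonneg _) (hzM s hs) 2) (by positivity) hK0
    have hrhs : |-b s * z s ^ 2 - a s| ≤ K * M ^ 2 + |a s| :=
      calc |-b s * z s ^ 2 - a s| ≤ |-b s * z s ^ 2| + |a s| := abs_sub _ _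
        _ = |b s| * |z s| ^ 2 + |a s| := by rw [abs_mul, abs_neg, abs_pow]
        _ ≤ K * M ^ 2 + |a s| := by linarith
    rw [hode s hs', abs_mul, abs_exp, ← mul_assoc]
    exact mul_le_mul hexp hrhs (abs_nonneg _) (by positivity)
  have hmaj : Continuous fun s => exp (c * u) * (E * (K * M ^ 2 + |a s|)) := by fun_prop
  have hbound := abs_intervalIntegral_le_integral_of_mem_Icc ht₀ hu
    (hmaj.intervalIntegrable _ _) (fun s _ => by positivity) hpt
  rw [integral_exp_mul_mul_deriv_add_mul hz, hz0, mul_zero, sub_zero, abs_mul, abs_exp,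
    intervalIntegral.integral_const_mul, intervalIntegral.integral_const_mul,
    intervalIntegral.integral_add intervalIntegrable_const (ha.abs.intervalIntegrable _ _),
    intervalIntegral.integral_const, smul_eq_mul, sub_zero] at hbound
  refine le_of_mul_le_mul_left (hbound.trans_eq ?_) (exp_pos (c * u))
  ring

theorem stmt10_general (T c ν D M : ℝ) (hT : 0 < T)
    (a b : ℝ → ℝ) (ha : Continuous a)
    (hbD : ∀ t ∈ Set.Icc (0:ℝ) T, |b t| ≤ ν * D)
    (z : ℝ → ℝ) (hz : ContDiff ℝ 1 z)
    (t₀ : ℝ) (ht₀ : t₀ ∈ Set.Icc (0:ℝ) T) (hz0 : z t₀ = 0)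
    (hode : ∀ t ∈ Set.Icc (0:ℝ) T,
      deriv z t + c * z t = -(b t) * (z t) ^ 2 - a t)
    (hM : Real.exp (|c| * T) * (∫ t in (0:ℝ)..T, |a t|) < M)
    (hsmall : ν * D < (M - Real.exp (|c| * T) * ∫ t in (0:ℝ)..T, |a t|)
      / (M ^ 2 * T * Real.exp (|c| * T))) :
    ∀ t ∈ Set.Icc (0:ℝ) T, |z t| ≤ M := by
  set A := ∫ t in (0:ℝ)..T, |a t|
  have hA : 0 ≤ A := intervalIntegral.integral_nonneg hT.le fun _ _ => abs_nonneg _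
  have hM0 : 0 < M := (by positivity : 0 ≤ exp (|c| * T) * A).trans_lt hM
  have hR : exp (|c| * T) * (ν * D * M ^ 2 * T + A) < M := by
    rw [lt_div_iff₀ (by positivity)] at hsmall
    linarith
  exact hz.continuous.abs.continuousOn.le_of_bootstrap_uIcc ht₀ hR (by simpa [hz0] using hM0.le)
    fun u hu hzM => abs_le_of_riccati hz ha hbD hode ht₀ hz0 hu hzM

theorem stmt10 (T c ν D M : ℝ) (hT : 0 < T) (hν : 0 < ν) (hD : 0 < D)
    (a b : ℝ → ℝ) (ha : Continuous a) (hb : Continuous b)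
    (hbD : ∀ t ∈ Set.Icc (0:ℝ) T, |b t| ≤ ν * D)
    (z : ℝ → ℝ) (hz : ContDiff ℝ 1 z) (hzper : z 0 = z T)
    (t₀ : ℝ) (ht₀ : t₀ ∈ Set.Icc (0:ℝ) T) (hz0 : z t₀ = 0)
    (hode : ∀ t ∈ Set.Icc (0:ℝ) T,
      deriv z t + c * z t = -(b t) * (z t) ^ 2 - a t)
    (hM : Real.exp (|c| * T) * (∫ t in (0:ℝ)..T, |a t|) < M)
    (hsmall : ν * D < (M - Real.exp (|c| * T) * ∫ t in (0:ℝ)..T, |a t|)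
      / (M ^ 2 * T * Real.exp (|c| * T))) :
    ∀ t ∈ Set.Icc (0:ℝ) T, |z t| ≤ M :=
  stmt10_general T c ν D M hT a b ha hbD z hz t₀ ht₀ hz0 hode hM hsmall
end

section
/- Let J ⊆ ℝ be an interval, g : J → (0,∞) continuously differentiable with bounded derivative, a : ℝ → ℝ continuous T-periodic with ∫₀ᵀ a(t) dt < 0, and c ∈ ℝ. There exists ω* > 0 (depending only on c, T, a) such that if ν · sup_{s∈J}|g'(s)| < ω*, then there is no C^2 T-periodic solution u of u'' + c u' + ν a(t) g(u) = 0 with u(t) ∈ J for all t. -/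
/-!
Along a `T`-periodic solution `u`, the function `z = u' / (ν g(u))` solves the Riccati equation
`z' + c z = -a - ν g'(u) z²`, vanishes at a maximum point of `u`, and has zero mean over a period,
being the derivative of `Φ(u) / ν` for a primitive `Φ` of `1 / g`. Duhamel's formula together with a
continuity argument keeps `|z| < M` on a period once `ν ‖g'‖∞` is small. Integrating the Riccati
equation over that period then gives `-∫ a = ∫ ν g'(u) z² ≤ ν ‖g'‖∞ M² T`, which fails for small
`ν ‖g'‖∞` because `∫ a < 0`.
-/

open Set Function Real intervalIntegral

theorem Function.Periodic.exists_forall_le_of_continuous {f : ℝ → ℝ} {T : ℝ} (hf : Periodic f T)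
    (hT : T ≠ 0) (hc : Continuous f) : ∃ x, ∀ y, f y ≤ f x := by
  obtain ⟨_, ⟨x, rfl⟩, hx⟩ := (hf.compact_of_continuous hT hc).exists_isGreatest (range_nonempty f)
  exact ⟨x, fun y => hx ⟨y, rfl⟩⟩

theorem Function.Periodic.deriv {f : ℝ → ℝ} {T : ℝ} (hf : Periodic f T) : Periodic (deriv f) T :=
  fun x => by rw [← deriv_comp_add_const, hf.funext]

theorem abs_lt_of_bootstrap {f : ℝ → ℝ} {a b M : ℝ} (hf : Continuous f) (ha : |f a| < M)
    (hstep : ∀ t ∈ Icc a b, (∀ s ∈ Icc a t, |f s| ≤ M) → |f t| < M) :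
    ∀ t ∈ Icc a b, |f t| < M := by
  by_contra! hbad
  set S := Icc a b ∩ {t | M ≤ |f t|}
  have hS : IsClosed S := isClosed_Icc.inter (isClosed_le continuous_const hf.abs)
  have hSbdd : BddBelow S := ⟨a, fun t ht => ht.1.1⟩
  have hmem : sInf S ∈ S := hS.csInf_mem hbad hSbdd
  obtain ⟨⟨hab₁, hb₁⟩, hM₁⟩ := hmem
  have hbefore : ∀ s ∈ Ico a (sInf S), |f s| < M := by
    intro s hs
    by_contra! h
    exact (csInf_le hSbdd ⟨⟨hs.1, hs.2.le.trans hb₁⟩, h⟩).not_gt hs.2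
  have ha₁ : a < sInf S := hab₁.lt_of_ne fun h => hM₁.not_gt (h ▸ ha)
  have hupto : Icc a (sInf S) ⊆ {s | |f s| ≤ M} := by
    rw [← closure_Ico ha₁.ne]
    exact closure_minimal (fun s hs => (hbefore s hs).le) (isClosed_le hf.abs continuous_const)
  exact hM₁.not_gt (hstep _ ⟨hab₁, hb₁⟩ hupto)

theorem abs_le_of_hasDerivAt_linear {z f : ℝ → ℝ} {c t₀ t : ℝ} (hf : Continuous f)
    (hz : ∀ t, HasDerivAt z (-(c * z t) + f t) t) (hz₀ : z t₀ = 0) (ht : t₀ ≤ t) :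
    |z t| ≤ exp (|c| * (t - t₀)) * ∫ s in t₀..t, |f s| := by
  have hφ : ∀ s, HasDerivAt (fun s => exp (c * s) * z s) (exp (c * s) * f s) s := fun s => by
    have hexp : HasDerivAt (fun s => exp (c * s)) (exp (c * s) * c) s := by
      simpa using ((hasDerivAt_id s).const_mul c).exp
    exact (hexp.mul (hz s)).congr_deriv (by ring)
  have hduhamel : z t = ∫ s in t₀..t, exp (c * (s - t)) * f s := by
    have hcont : Continuous fun s => exp (c * s) * f s := by fun_prop
    have hftc : ∫ s in t₀..t, exp (c * s) * f s = exp (c * t) * z t := by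
      rw [integral_eq_sub_of_hasDerivAt (fun s _ => hφ s) (hcont.intervalIntegrable t₀ t), hz₀,
        mul_zero, sub_zero]
    calc z t = exp (-(c * t)) * ∫ s in t₀..t, exp (c * s) * f s := by
          rw [hftc, ← mul_assoc, ← exp_add, neg_add_cancel, exp_zero, one_mul]
      _ = ∫ s in t₀..t, exp (c * (s - t)) * f s := by
          rw [← integral_const_mul]
          simp only [← mul_assoc, ← exp_add]
          ring_nf
  rw [hduhamel, ← integral_const_mul]
  refine (abs_integral_le_integral_abs ht).trans (integral_mono_on ht ?_ ?_ fun s hs => ?_)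
  · exact ((continuous_exp.comp (by fun_prop)).mul hf).abs.intervalIntegrable _ _
  · exact (continuous_const.mul hf.abs).intervalIntegrable _ _
  · rw [abs_mul, abs_exp]
    refine mul_le_mul_of_nonneg_right (exp_le_exp.mpr ?_) (abs_nonneg _)
    nlinarith [neg_abs_le c, abs_nonneg c, hs.1, hs.2]

theorem abs_mul_sq_le {q z K M : ℝ} (hq : |q| ≤ K) (hz : |z| ≤ M) : |q * z ^ 2| ≤ K * M ^ 2 := by
  rw [abs_mul, abs_pow]
  have hK : 0 ≤ K := (abs_nonneg q).trans hq
  gcongr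

theorem integral_mul_sq_le {q z : ℝ → ℝ} {K M a b : ℝ} (hab : a ≤ b) (hq : Continuous q)
    (hz : Continuous z) (hqK : ∀ t, |q t| ≤ K) (hzM : ∀ t ∈ Icc a b, |z t| ≤ M) :
    ∫ t in a..b, q t * z t ^ 2 ≤ K * M ^ 2 * (b - a) := calc
  ∫ t in a..b, q t * z t ^ 2 ≤ ∫ _ in a..b, K * M ^ 2 :=
    integral_mono_on hab ((hq.mul (hz.pow 2)).intervalIntegrable _ _) intervalIntegrable_const
      fun t ht => (le_abs_self _).trans (abs_mul_sq_le (hqK t) (hzM t ht))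
  _ = K * M ^ 2 * (b - a) := by rw [integral_const, smul_eq_mul, mul_comm]

theorem abs_lt_of_hasDerivAt_riccati {z a q : ℝ → ℝ} {c K M T t₀ : ℝ} (ha : Continuous a)
    (hq : Continuous q) (hqK : ∀ t, |q t| ≤ K)
    (hz : ∀ t, HasDerivAt z (-(c * z t) - a t - q t * z t ^ 2) t) (hz₀ : z t₀ = 0)
    (hM : exp (|c| * T) * ((∫ t in t₀..t₀ + T, |a t|) + K * M ^ 2 * T) < M) :
    ∀ t ∈ Icc t₀ (t₀ + T), |z t| < M := by
  rintro t ⟨ht₀, htT⟩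
  have hT : 0 ≤ T := by linarith
  have hzc : Continuous z := Differentiable.continuous fun t => (hz t).differentiableAt
  have hA : 0 ≤ ∫ t in t₀..t₀ + T, |a t| := integral_nonneg (by linarith) fun _ _ => abs_nonneg _
  have hK : 0 ≤ K := (abs_nonneg _).trans (hqK t₀)
  refine abs_lt_of_bootstrap hzc ?_ (fun s hs hle => ?_) t ⟨ht₀, htT⟩
  · rw [hz₀, abs_zero]
    exact lt_of_le_of_lt (by positivity) hM
  set f := fun r => -a r - q r * z r ^ 2
  have hf : Continuous f := by fun_prop
  have hf_le : ∫ r in t₀..s, |f r| ≤ (∫ r in t₀..t₀ + T, |a r|) + K * M ^ 2 * T := calc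
    ∫ r in t₀..s, |f r| ≤ ∫ r in t₀..s, (|a r| + K * M ^ 2) := by
        refine integral_mono_on hs.1 (hf.abs.intervalIntegrable _ _)
          ((ha.abs.add continuous_const).intervalIntegrable _ _) fun r hr => ?_
        exact (abs_sub _ _).trans (by rw [abs_neg]; gcongr; exact abs_mul_sq_le (hqK r) (hle r hr))
    _ = (∫ r in t₀..s, |a r|) + K * M ^ 2 * (s - t₀) := by
        rw [integral_add (ha.abs.intervalIntegrable _ _) intervalIntegrable_const, integral_const,
          smul_eq_mul, mul_comm]
    _ ≤ (∫ r in t₀..t₀ + T, |a r|) + K * M ^ 2 * T := by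
        gcongr ?_ + ?_
        · exact integral_mono_interval le_rfl hs.1 hs.2 (.of_forall fun _ => abs_nonneg _)
            (ha.abs.intervalIntegrable _ _)
        · exact mul_le_mul_of_nonneg_left (by linarith [hs.2]) (by positivity)
  calc |z s| ≤ exp (|c| * (s - t₀)) * ∫ r in t₀..s, |f r| :=
        abs_le_of_hasDerivAt_linear hf (fun r => (hz r).congr_deriv (by ring)) hz₀ hs.1
    _ ≤ exp (|c| * T) * ((∫ r in t₀..t₀ + T, |a r|) + K * M ^ 2 * T) := by
        gcongr
        · exact integral_nonneg hs.1 fun _ _ => abs_nonneg _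
        · linarith [hs.2]
    _ < M := hM

theorem integral_mul_sq_eq_of_hasDerivAt_riccati {z a q : ℝ → ℝ} {c T t₀ : ℝ}
    (ha : Continuous a) (hq : Continuous q) (hzP : Periodic z T)
    (hz : ∀ t, HasDerivAt z (-(c * z t) - a t - q t * z t ^ 2) t)
    (hz_int : ∫ t in t₀..t₀ + T, z t = 0) :
    ∫ t in t₀..t₀ + T, q t * z t ^ 2 = -∫ t in t₀..t₀ + T, a t := by
  have hzc : Continuous z := Differentiable.continuous fun t => (hz t).differentiableAt
  have hz'c : Continuous fun t => -(c * z t) - a t - q t * z t ^ 2 := by fun_prop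
  have hz' : ∫ t in t₀..t₀ + T, (-(c * z t) - a t - q t * z t ^ 2) = 0 := by
    rw [integral_eq_sub_of_hasDerivAt (fun t _ => hz t) (hz'c.intervalIntegrable _ _), hzP,
      sub_self]
  rw [integral_sub ((by fun_prop : Continuous _).intervalIntegrable _ _)
      ((by fun_prop : Continuous _).intervalIntegrable _ _),
    integral_sub ((by fun_prop : Continuous _).intervalIntegrable _ _) (ha.intervalIntegrable _ _),
    integral_neg, integral_const_mul, hz_int] at hz'
  linarith

noncomputable def riccatiSubst (ν : ℝ) (g u : ℝ → ℝ) (t : ℝ) : ℝ := deriv u t / (ν * g (u t))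

theorem Function.Periodic.riccatiSubst {u g : ℝ → ℝ} {ν T : ℝ} (huP : Periodic u T) :
    Periodic (riccatiSubst ν g u) T :=
  fun t => by simp only [_root_.riccatiSubst, huP.deriv t, huP t]

theorem hasDerivAt_riccatiSubst {u g a : ℝ → ℝ} {c ν : ℝ} (hu : ContDiff ℝ 2 u)
    (hg : ContDiff ℝ 1 g) (hν : ν ≠ 0) (hgu : ∀ t, g (u t) ≠ 0)
    (hode : ∀ t, deriv (deriv u) t + c * deriv u t + ν * a t * g (u t) = 0) (t : ℝ) :
    HasDerivAt (riccatiSubst ν g u) (-(c * riccatiSubst ν g u t) - a t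
      - ν * deriv g (u t) * riccatiSubst ν g u t ^ 2) t := by
  have hu' : ContDiff ℝ 1 (deriv u) := hu.deriv' (n := 1)
  have hut : HasDerivAt u (deriv u t) t := (hu.differentiable (by norm_num) t).hasDerivAt
  have hgut : HasDerivAt (fun s => ν * g (u s)) (ν * (deriv g (u t) * deriv u t)) t :=
    ((hg.differentiable one_ne_zero (u t)).hasDerivAt.comp t hut).const_mul ν
  have hdiv := (hu'.differentiable one_ne_zero t).hasDerivAt.div hgut (mul_ne_zero hν (hgu t))
  refine hdiv.congr_deriv ?_
  rw [show deriv (deriv u) t = -(c * deriv u t) - ν * a t * g (u t) by linarith [hode t]]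
  simp only [riccatiSubst]
  field_simp [hgu t]

theorem integral_riccatiSubst_eq_zero {u g : ℝ → ℝ} {ν T t₀ : ℝ} (hu : ContDiff ℝ 1 u)
    (hg : Continuous g) (hgu : ∀ t, g (u t) ≠ 0) (huP : Periodic u T) :
    ∫ t in t₀..t₀ + T, riccatiSubst ν g u t = 0 := by
  have hsubst := integral_comp_mul_deriv' (a := t₀) (b := t₀ + T) (g := fun x => (g x)⁻¹)
    (fun t _ => (hu.differentiable one_ne_zero t).hasDerivAt)
    (hu.continuous_deriv le_rfl).continuousOn
    (hg.continuousOn.inv₀ (by rintro _ ⟨t, -, rfl⟩; exact hgu t))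
  rw [huP, integral_same] at hsubst
  simp only [riccatiSubst, div_eq_mul_inv, mul_inv, comp_apply] at hsubst ⊢
  simp_rw [show ∀ t, deriv u t * (ν⁻¹ * (g (u t))⁻¹) = ν⁻¹ * ((g (u t))⁻¹ * deriv u t) from
    fun t => by ring]
  rw [integral_const_mul, hsubst, mul_zero]

theorem stmt11 (T c : ℝ) (hT : 0 < T)
    (a : ℝ → ℝ) (ha : Continuous a) (haP : Function.Periodic a T)
    (haneg : (∫ t in (0:ℝ)..T, a t) < 0) :
    ∃ ω > (0:ℝ), ∀ (J : Set ℝ) (g : ℝ → ℝ) (D ν : ℝ),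
      ContDiff ℝ 1 g → (∀ s ∈ J, 0 < g s) → (∀ s ∈ J, |deriv g s| ≤ D) →
      0 < ν → ν * D < ω →
      ¬ ∃ u : ℝ → ℝ, ContDiff ℝ 2 u ∧ Function.Periodic u T ∧ (∀ t, u t ∈ J) ∧
        ∀ t, deriv (deriv u) t + c * deriv u t + ν * a t * g (u t) = 0 := by
  set A := ∫ t in (0:ℝ)..T, |a t|
  set E := exp (|c| * T)
  have hM : 0 < E * A + 1 := by
    have : 0 ≤ A := integral_nonneg hT.le fun _ _ => abs_nonneg _
    positivity
  set M := E * A + 1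
  -- the paper's `ω*` for `M = e^{|c|T} ‖a‖₁ + 1`
  refine ⟨min (1 / (E * T * M ^ 2)) (-(∫ t in (0:ℝ)..T, a t) / (M ^ 2 * T)),
    lt_min (by positivity) (div_pos (neg_pos.mpr haneg) (by positivity)), ?_⟩
  rintro J g D ν hg hgJ hgD hν hνD ⟨u, hu, huP, huJ, hode⟩
  obtain ⟨hω₁, hω₂⟩ := lt_min_iff.mp hνD
  rw [lt_div_iff₀ (by positivity)] at hω₁ hω₂
  have hgu : ∀ t, g (u t) ≠ 0 := fun t => (hgJ _ (huJ t)).ne'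
  have hq : Continuous fun t => ν * deriv g (u t) :=
    continuous_const.mul ((hg.continuous_deriv le_rfl).comp hu.continuous)
  have hqK : ∀ t, |ν * deriv g (u t)| ≤ ν * D := fun t => by
    rw [abs_mul, abs_of_pos hν]; exact mul_le_mul_of_nonneg_left (hgD _ (huJ t)) hν.le
  have hz := hasDerivAt_riccatiSubst hu hg hν.ne' hgu hode
  obtain ⟨t₀, ht₀⟩ := huP.exists_forall_le_of_continuous hT.ne' hu.continuous
  have hz₀ : riccatiSubst ν g u t₀ = 0 := by
    simp [riccatiSubst, IsLocalMax.deriv_eq_zero (.of_forall ht₀)]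
  have hA : ∫ t in t₀..t₀ + T, |a t| = A := by
    simpa using (haP.comp (|·|)).intervalIntegral_add_eq t₀ 0
  have hzM := abs_lt_of_hasDerivAt_riccati ha hq hqK hz hz₀ (M := M) (by rw [hA]; nlinarith)
  have hid := integral_mul_sq_eq_of_hasDerivAt_riccati (t₀ := t₀) ha hq huP.riccatiSubst hz
    (integral_riccatiSubst_eq_zero (hu.of_le (by norm_num)) hg.continuous hgu huP)
  rw [haP.intervalIntegral_add_eq t₀ 0, zero_add] at hid
  have hle := integral_mul_sq_le (by linarith) hq
    (Differentiable.continuous fun t => (hz t).differentiableAt) hqK fun t ht => (hzM t ht).le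
  rw [hid, add_sub_cancel_left] at hle
  linarith
end

section
/- Let u be a nonnegative C^2 T-periodic solution of u'' + c u' + ϑ λ a(t) g(u) = 0 with ϑ ∈ (0,1], ‖u‖_∞ = R, and suppose |g(s)| ≤ ε s for all s ≥ R/2, where 2λεT‖a‖_{L¹} < 1 (and wlog c = 0). Then u(t) ≥ R/2 for all t. -/
/-!
Suppose `u` dips below `R / 2`. By periodicity there is a point `t₀` less than one period before
a maximum point `tₘ` with `u t₀ < R / 2`; let `α ∈ [t₀, tₘ]` be the last time `u` equals `R / 2`,
so `u ≥ R / 2` on `[α, tₘ]`. There `|u''| ≤ λ ε R |a|`, and since `u'(tₘ) = 0` this gives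
`|u'| ≤ λ ε R ‖a‖_{L¹}` on `[α, tₘ]`. Hence `R / 2 = u tₘ - u α ≤ T λ ε R ‖a‖_{L¹} < R / 2`.
-/

open Set MeasureTheory

theorem exists_mem_Icc_eq_and_le_of_le_of_le {f : ℝ → ℝ} {a b c : ℝ} (hf : ContinuousOn f (Icc a b))
    (hab : a ≤ b) (ha : f a ≤ c) (hb : c ≤ f b) :
    ∃ α ∈ Icc a b, f α = c ∧ ∀ t ∈ Icc α b, c ≤ f t := by
  set S := Icc a b ∩ f ⁻¹' Iic c
  have hS : IsClosed S := hf.preimage_isClosed_of_isClosed isClosed_Icc isClosed_Iic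
  have hSne : S.Nonempty := ⟨a, ⟨le_rfl, hab⟩, ha⟩
  have hSbdd : BddAbove S := ⟨b, fun t ht => ht.1.2⟩
  have hαS : sSup S ∈ S := hS.csSup_mem hSne hSbdd
  have hα_last : ∀ t ∈ Icc (sSup S) b, f t ≤ c → t = sSup S := fun t ht htc =>
    le_antisymm (le_csSup hSbdd ⟨⟨hαS.1.1.trans ht.1, ht.2⟩, htc⟩) ht.1
  obtain ⟨s, hs, hfs⟩ := intermediate_value_Icc hαS.1.2 (hf.mono (Icc_subset_Icc_left hαS.1.1))
    ⟨hαS.2, hb⟩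
  have hfα : f (sSup S) = c := hα_last s hs hfs.le ▸ hfs
  refine ⟨sSup S, hαS.1, hfα, fun t ht => ?_⟩
  by_contra! htc
  exact htc.ne (hα_last t ht htc.le ▸ hfα)

theorem sub_le_mul_integral_of_abs_deriv_deriv_le {u h : ℝ → ℝ} {a b : ℝ} (hu : ContDiff ℝ 2 u)
    (hab : a ≤ b) (hub : deriv u b = 0) (hh : IntervalIntegrable h volume a b)
    (hbound : ∀ t ∈ Icc a b, |deriv (deriv u) t| ≤ h t) :
    u b - u a ≤ (b - a) * ∫ t in a..b, h t := by
  have hu' : Differentiable ℝ (deriv u) := hu.differentiable_deriv_two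
  have hu'' : Continuous (deriv (deriv u)) := (hu.deriv' (n := 1)).continuous_deriv_one
  have hderiv : ∀ t ∈ Icc a b, ‖deriv u t‖ ≤ ∫ s in a..b, h s := by
    intro t ht
    have hsub : Icc t b ⊆ Icc a b := Icc_subset_Icc_left ht.1
    calc ‖deriv u t‖ = ‖∫ s in t..b, deriv (deriv u) s‖ := by
          rw [intervalIntegral.integral_deriv_eq_sub (fun s _ => hu' s)
            (hu''.intervalIntegrable _ _), hub, zero_sub, norm_neg]
      _ ≤ ∫ s in t..b, h s :=
          intervalIntegral.norm_integral_le_of_norm_le ht.2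
            (Filter.Eventually.of_forall fun s hs => hbound s (hsub (Ioc_subset_Icc_self hs)))
            (hh.mono_set (by simp [uIcc_of_le hab, uIcc_of_le ht.2, hsub]))
      _ ≤ ∫ s in a..b, h s :=
          intervalIntegral.integral_mono_interval ht.1 ht.2 le_rfl
            (ae_restrict_of_forall_mem measurableSet_Ioc fun s hs =>
              (abs_nonneg _).trans (hbound s (Ioc_subset_Icc_self hs))) hh
  have hmvt := norm_image_sub_le_of_norm_deriv_le_segment'
    (fun t _ => (hu.differentiable two_ne_zero t).hasDerivAt.hasDerivWithinAt)
    (fun t ht => hderiv t (Ico_subset_Icc_self ht)) b ⟨hab, le_rfl⟩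
  rw [Real.norm_eq_abs] at hmvt
  linarith [le_abs_self (u b - u a)]

theorem Function.Periodic.intervalIntegral_le_of_le_add_period {f : ℝ → ℝ} {T a b : ℝ}
    (hf : Function.Periodic f T) (hfc : Continuous f) (hf0 : ∀ t, 0 ≤ f t) (hab : a ≤ b)
    (hb : b ≤ a + T) : ∫ t in a..b, f t ≤ ∫ t in (0:ℝ)..T, f t := by
  calc ∫ t in a..b, f t ≤ ∫ t in a..a + T, f t :=
        intervalIntegral.integral_mono_interval le_rfl hab hb
          (Filter.Eventually.of_forall hf0) (hfc.intervalIntegrable _ _)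
    _ = ∫ t in (0:ℝ)..T, f t := by simpa using hf.intervalIntegral_add_eq a 0

theorem stmt17_general (T lam ε ϑ R : ℝ) (hT : 0 < T) (hlam : 0 < lam) (hε : 0 < ε)
    (hϑ : ϑ ∈ Set.Ioc (0:ℝ) 1) (hR : 0 < R)
    (a : ℝ → ℝ) (ha : Continuous a) (haP : Function.Periodic a T)
    (g : ℝ → ℝ)
    (hgε : ∀ s, R / 2 ≤ s → |g s| ≤ ε * s)
    (hsmall : 2 * lam * ε * T * (∫ t in (0:ℝ)..T, |a t|) < 1)
    (u : ℝ → ℝ) (hu : ContDiff ℝ 2 u) (huP : Function.Periodic u T)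
    (hub : ∀ t, u t ≤ R) (hattain : ∃ t, u t = R)
    (hode : ∀ t, deriv (deriv u) t + ϑ * lam * a t * g (u t) = 0) :
    ∀ t, R / 2 ≤ u t := by
  by_contra! ⟨t₁, ht₁⟩
  obtain ⟨tₘ, htₘ⟩ := hattain
  obtain ⟨t₀, ht₀, hut₀⟩ := huP.exists_mem_Ico hT t₁ (tₘ - T)
  rw [sub_add_cancel] at ht₀
  obtain ⟨α, hα, huα, hge⟩ := exists_mem_Icc_eq_and_le_of_le_of_le hu.continuous.continuousOn
    ht₀.2.le (hut₀ ▸ ht₁.le) (by linarith)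
  have hmax : deriv u tₘ = 0 :=
    IsLocalMax.deriv_eq_zero (Filter.Eventually.of_forall fun t => htₘ ▸ hub t)
  have hbound : ∀ t ∈ Icc α tₘ, |deriv (deriv u) t| ≤ lam * ε * R * |a t| := by
    intro t ht
    have hg : |g (u t)| ≤ ε * R := (hgε _ (hge t ht)).trans (by gcongr; exact hub t)
    rw [show deriv (deriv u) t = -(ϑ * lam * a t * g (u t)) by linarith [hode t], abs_neg,
      abs_mul, abs_mul, abs_mul, abs_of_pos hϑ.1, abs_of_pos hlam]
    calc ϑ * lam * |a t| * |g (u t)| ≤ 1 * lam * |a t| * (ε * R) := by gcongr; exact hϑ.2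
      _ = lam * ε * R * |a t| := by ring
  have hrise := sub_le_mul_integral_of_abs_deriv_deriv_le (h := fun t => lam * ε * R * |a t|)
    hu hα.2 hmax
    ((continuous_const.mul ha.abs).intervalIntegrable _ _) hbound
  rw [intervalIntegral.integral_const_mul, htₘ, huα] at hrise
  have hI := (haP.comp abs).intervalIntegral_le_of_le_add_period ha.abs (fun t => abs_nonneg _)
    hα.2 (by linarith [hα.1, ht₀.1])
  have hI0 : 0 ≤ ∫ t in α..tₘ, |a t| :=
    intervalIntegral.integral_nonneg hα.2 fun t _ => abs_nonneg _
  have : R / 2 < R / 2 := calc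
    R / 2 ≤ (tₘ - α) * (lam * ε * R * ∫ t in α..tₘ, |a t|) := by linarith
    _ ≤ T * (lam * ε * R * ∫ t in (0:ℝ)..T, |a t|) := by
        gcongr
        · linarith [hα.1, ht₀.1]
        · exact hI
    _ = R * (2 * lam * ε * T * ∫ t in (0:ℝ)..T, |a t|) / 2 := by ring
    _ < R / 2 := by nlinarith
  exact lt_irrefl _ this

theorem stmt17 (T lam ε ϑ R : ℝ) (hT : 0 < T) (hlam : 0 < lam) (hε : 0 < ε)
    (hϑ : ϑ ∈ Set.Ioc (0:ℝ) 1) (hR : 0 < R)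
    (a : ℝ → ℝ) (ha : Continuous a) (haP : Function.Periodic a T)
    (g : ℝ → ℝ) (hg : Continuous g) (hgnn : ∀ s, 0 ≤ s → 0 ≤ g s)
    (hgε : ∀ s, R / 2 ≤ s → |g s| ≤ ε * s)
    (hsmall : 2 * lam * ε * T * (∫ t in (0:ℝ)..T, |a t|) < 1)
    (u : ℝ → ℝ) (hu : ContDiff ℝ 2 u) (huP : Function.Periodic u T)
    (hunn : ∀ t, 0 ≤ u t) (hub : ∀ t, u t ≤ R) (hattain : ∃ t, u t = R)
    (hode : ∀ t, deriv (deriv u) t + ϑ * lam * a t * g (u t) = 0) :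
    ∀ t, R / 2 ≤ u t :=
  stmt17_general T lam ε ϑ R hT hlam hε hϑ hR a ha haP g hgε hsmall u hu huP hub hattain hode
end
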